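/- If G is a compact Lie group acting on a stratified space X by a stratified action, then the orbit space B = X/G with the partition {π(S) : S a stratum of X} is a stratified space, and the orbit map π : X → B is a morphism of stratified spaces. -/

import Mathlib

/-- A stratified space: a locally finite partition into connected strata
satisfying the frontier condition. -/
structure StratifiedSpace (X : Type*) [TopologicalSpace X] where
  strata : Set (Set X)
  nonempty_strata : ∀ S ∈ strata, S.Nonempty
  covers : ∀ x : X, ∃ S ∈ strata, x ∈ S
  disj : ∀ S ∈ strata, ∀ T ∈ strata, (S ∩ T).Nonempty → S = T
  connected : ∀ S ∈ strata, IsConnected S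
  locallyFinite : ∀ x : X, ∃ U ∈ nhds x, {S ∈ strata | (S ∩ U).Nonempty}.Finite
  frontier_cond : ∀ S ∈ strata, ∀ T ∈ strata, (S ∩ closure T).Nonempty → S ⊆ closure T

/-- The regular part: the union of the open strata. -/
def regularPart {X : Type*} [TopologicalSpace X] (𝒳 : StratifiedSpace X) : Set X :=
  ⋃₀ {S | S ∈ 𝒳.strata ∧ IsOpen S}

/-!
The strata of `X` are permuted by the group, so their images in `X/G` are either equal or
disjoint, and the orbit map, being open, carries local finiteness down to the quotient.
For the frontier condition, the preimage of the closure of `π(T)` is the closure of the union of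
the translates `g • T`; these translates are strata, so by local finiteness that closure is the
union of their closures, and the frontier condition upstairs pushes down along `π`.
-/

open MulAction Set

theorem MulAction.image_quotient_mk_image_smul {G X : Type*} [Group G] [MulAction G X] (g : G)
    (T : Set X) : Quotient.mk (orbitRel G X) '' ((fun x => g • x) '' T) =
      Quotient.mk (orbitRel G X) '' T := by
  rw [image_image]
  exact image_congr fun x _ => Quotient.sound (mem_orbit x g)

namespace StratifiedSpace

variable {X : Type*} [TopologicalSpace X] (𝒳 : StratifiedSpace X)

def IsInvariant (G : Type*) [SMul G X] : Prop :=
  ∀ g : G, ∀ S ∈ 𝒳.strata, (fun x => g • x) '' S ∈ 𝒳.strata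

theorem locallyFinite_strata : LocallyFinite fun S : 𝒳.strata => (S : Set X) := fun x => by
  obtain ⟨U, hU, hfin⟩ := 𝒳.locallyFinite x
  exact ⟨U, hU, (hfin.preimage Subtype.val_injective.injOn).subset fun S hS => ⟨S.2, hS⟩⟩

theorem closure_sUnion_of_subset_strata {𝒮 : Set (Set X)} (h𝒮 : 𝒮 ⊆ 𝒳.strata) :
    closure (⋃₀ 𝒮) = ⋃ S ∈ 𝒮, closure S := by
  have h𝒮fin : LocallyFinite fun S : 𝒮 => (S : Set X) :=
    𝒳.locallyFinite_strata.comp_injective (inclusion_injective h𝒮)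
  rw [sUnion_eq_iUnion, h𝒮fin.closure_iUnion, biUnion_eq_iUnion]

variable {𝒳}

theorem smul_image_eq_of_mem {G : Type*} [SMul G X] (hmor : 𝒳.IsInvariant G) {S T : Set X}
    (hS : S ∈ 𝒳.strata) (hT : T ∈ 𝒳.strata) {x y : X} (hx : x ∈ S) (hy : y ∈ T)
    {g : G} (hg : g • y = x) :
    (fun x => g • x) '' T = S :=
  𝒳.disj _ (hmor g T hT) S hS ⟨x, ⟨y, hy, hg⟩, hx⟩

theorem closure_iUnion_smul_image {G : Type*} [SMul G X]
    (hmor : 𝒳.IsInvariant G) {T : Set X} (hT : T ∈ 𝒳.strata) :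
    closure (⋃ g : G, (fun x => g • x) '' T) = ⋃ g : G, closure ((fun x => g • x) '' T) := by
  rw [← sUnion_range, 𝒳.closure_sUnion_of_subset_strata (range_subset_iff.2 fun g => hmor g T hT),
    biUnion_range]

variable {G : Type*} [Group G] [MulAction G X]

local notation "π" => Quotient.mk (orbitRel G X)

theorem image_mk_eq_of_inter_nonempty (hmor : 𝒳.IsInvariant G) {S T : Set X}
    (hS : S ∈ 𝒳.strata) (hT : T ∈ 𝒳.strata) (hST : (π '' S ∩ π '' T).Nonempty) :
    π '' S = π '' T := by
  obtain ⟨_, ⟨x, hx, hxb⟩, ⟨y, hy, rfl⟩⟩ := hST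
  obtain ⟨g, hg⟩ := Quotient.exact hxb
  rw [← smul_image_eq_of_mem hmor hS hT hx hy hg, image_quotient_mk_image_smul]

variable [ContinuousConstSMul G X]

theorem image_mk_subset_closure_image_mk (hmor : 𝒳.IsInvariant G) {S T : Set X}
    (hS : S ∈ 𝒳.strata) (hT : T ∈ 𝒳.strata) (hST : (π '' S ∩ closure (π '' T)).Nonempty) :
    π '' S ⊆ closure (π '' T) := by
  obtain ⟨_, ⟨x, hx, rfl⟩, hxT⟩ := hST
  have hsaturation : π ⁻¹' (π '' T) = ⋃ g : G, (fun x => g • x) '' T :=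
    quotient_preimage_image_eq_union_mul T
  have hx_closure : x ∈ ⋃ g : G, closure ((fun x => g • x) '' T) := by
    rw [← closure_iUnion_smul_image hmor hT, ← hsaturation,
      ← isOpenQuotientMap_quotientMk.isOpenMap.preimage_closure_eq_closure_preimage
        continuous_quotient_mk']
    exact hxT
  obtain ⟨g, hg⟩ := mem_iUnion.1 hx_closure
  calc π '' S ⊆ π '' closure ((fun x => g • x) '' T) :=
        image_mono (𝒳.frontier_cond S hS _ (hmor g T hT) ⟨x, hx, hg⟩)
    _ ⊆ closure (π '' ((fun x => g • x) '' T)) :=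
        image_closure_subset_closure_image continuous_quotient_mk'
    _ = closure (π '' T) := by rw [image_quotient_mk_image_smul]

theorem exists_mem_nhds_finite_image_mk (hmor : 𝒳.IsInvariant G) (b : Quotient (orbitRel G X)) :
    ∃ V ∈ nhds b, {S ∈ (fun S => π '' S) '' 𝒳.strata | (S ∩ V).Nonempty}.Finite := by
  obtain ⟨x, rfl⟩ := Quotient.mk_surjective b
  obtain ⟨U, hU, hfin⟩ := 𝒳.locallyFinite x
  refine ⟨π '' U, isOpenQuotientMap_quotientMk.isOpenMap.image_mem_nhds hU,
    (hfin.image fun S => π '' S).subset ?_⟩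
  rintro _ ⟨⟨T, hT, rfl⟩, _, ⟨y, hy, hyu⟩, ⟨u, hu, rfl⟩⟩
  obtain ⟨g, rfl⟩ := Quotient.exact hyu
  exact ⟨(fun x => g⁻¹ • x) '' T, ⟨hmor g⁻¹ T hT, u, ⟨g • u, hy, inv_smul_smul g u⟩, hu⟩,
    image_quotient_mk_image_smul _ _⟩

def orbitSpace (hmor : 𝒳.IsInvariant G) : StratifiedSpace (Quotient (orbitRel G X)) where
  strata := (fun S => π '' S) '' 𝒳.strata
  nonempty_strata := by
    rintro _ ⟨S, hS, rfl⟩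
    exact (𝒳.nonempty_strata S hS).image _
  covers b := by
    obtain ⟨x, rfl⟩ := Quotient.mk_surjective b
    obtain ⟨S, hS, hx⟩ := 𝒳.covers x
    exact ⟨_, mem_image_of_mem _ hS, mem_image_of_mem _ hx⟩
  disj := by
    rintro _ ⟨S, hS, rfl⟩ _ ⟨T, hT, rfl⟩
    exact image_mk_eq_of_inter_nonempty hmor hS hT
  connected := by
    rintro _ ⟨S, hS, rfl⟩
    exact (𝒳.connected S hS).image _ continuous_quotient_mk'.continuousOn
  locallyFinite := exists_mem_nhds_finite_image_mk hmor
  frontier_cond := by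
    rintro _ ⟨S, hS, rfl⟩ _ ⟨T, hT, rfl⟩
    exact image_mk_subset_closure_image_mk hmor hS hT

end StratifiedSpace

theorem orbit_space_stratified_general (G : Type*) (X : Type*)
    [CommGroup G] [TopologicalSpace G] [TopologicalSpace X]
    [MulAction G X] [ContinuousSMul G X]
    (𝒳 : StratifiedSpace X)
    -- each transformation Φ_g is an isomorphism of stratified spaces
    (hmor : ∀ g : G, ∀ S ∈ 𝒳.strata, (fun x => g • x) '' S ∈ 𝒳.strata) :
    ∃ SB : StratifiedSpace (Quotient (MulAction.orbitRel G X)),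
      SB.strata = (fun S => (Quotient.mk (MulAction.orbitRel G X)) '' S) '' 𝒳.strata ∧
      Continuous (Quotient.mk (MulAction.orbitRel G X)) ∧
      ∀ S ∈ 𝒳.strata, (Quotient.mk (MulAction.orbitRel G X)) '' S ∈ SB.strata :=
  ⟨𝒳.orbitSpace hmor, rfl, continuous_quotient_mk', fun _ hS => mem_image_of_mem _ hS⟩

/-- for a stratified action of a compact (abelian) group `G` on a
stratified space `X` — a continuous effective action which is a morphism of
stratified spaces (each transformation maps strata onto strata), is free on the
regular part, and for which the isotropy is constant along each stratum — the
orbit space `B = X/G` with the partition `{π(S)}` is a stratified space, and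
the orbit map `π : X → B` is continuous and sends strata into strata (a
morphism of stratified spaces). -/
theorem orbit_space_stratified (G : Type*) (X : Type*)
    [CommGroup G] [TopologicalSpace G] [IsTopologicalGroup G]
    [CompactSpace G] [TopologicalSpace X]
    [T2Space X] [ParacompactSpace X] [SecondCountableTopology X]
    [MulAction G X] [ContinuousSMul G X]
    (𝒳 : StratifiedSpace X)
    -- the action is effective
    (heff : ∀ g : G, (∀ x : X, g • x = x) → g = 1)
    -- each transformation Φ_g is an isomorphism of stratified spaces
    (hmor : ∀ g : G, ∀ S ∈ 𝒳.strata, (fun x => g • x) '' S ∈ 𝒳.strata)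
    -- the action is free on the regular part
    (hfree : ∀ x ∈ regularPart 𝒳, ∀ g : G, g • x = x → g = 1)
    -- points of one stratum have the same isotropy
    (hiso : ∀ S ∈ 𝒳.strata, ∀ x ∈ S, ∀ y ∈ S,
      MulAction.stabilizer G x = MulAction.stabilizer G y) :
    ∃ SB : StratifiedSpace (Quotient (MulAction.orbitRel G X)),
      SB.strata = (fun S => (Quotient.mk (MulAction.orbitRel G X)) '' S) '' 𝒳.strata ∧
      Continuous (Quotient.mk (MulAction.orbitRel G X)) ∧
      ∀ S ∈ 𝒳.strata, (Quotient.mk (MulAction.orbitRel G X)) '' S ∈ SB.strata :=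
  orbit_space_stratified_general G X 𝒳 hmor
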